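/- Let A = T_n⟨S; T⟩ be a walk-ensured Toeplitz matrix with d⁺ = gcd{s+t : s∈S, t∈T} and d = gcd(S ∪ T). Then the matrix period of A equals d⁺/d, i.e., d⁺/d is the least positive integer p such that for some M and all m ≥ M, A^m = A^{m+p} over the Boolean semiring. -/

import Mathlib

/-- gcd of all sums `s + t` with `s ∈ S`, `t ∈ T`. -/
def sumGcd (S T : Finset ℕ) : ℕ := (S ×ˢ T).gcd (fun p => p.1 + p.2)

/-- gcd of all elements of `S ∪ T`. -/
def unionGcd (S T : Finset ℕ) : ℕ := (S ∪ T).gcd id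

/-- Arc of the Toeplitz digraph `D(T_n⟨S;T⟩)` on vertex set `{1,…,n}`. -/
def arc (n : ℕ) (S T : Finset ℕ) (u v : ℕ) : Prop :=
  u ∈ Finset.Icc 1 n ∧ v ∈ Finset.Icc 1 n ∧
    ((∃ s ∈ S, (v : ℤ) - u = s) ∨ (∃ t ∈ T, (u : ℤ) - v = t))

/-- There is a directed walk of length `m` from `u` to `v` in `D(T_n⟨S;T⟩)`. -/
def hasWalk (n : ℕ) (S T : Finset ℕ) (u v m : ℕ) : Prop :=
  ∃ f : ℕ → ℕ, f 0 = u ∧ f m = v ∧ ∀ i < m, arc n S T (f i) (f (i + 1))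

/-- `ℓ ∈ P_i(A)` for `A = T_n⟨S;T⟩`, where `dplus = gcd(S+T)` and `s1 = min S`. -/
def Pset (n dplus s1 : ℕ) (i : ℕ) (ℓ : ℤ) : Prop :=
  -(n : ℤ) < ℓ ∧ ℓ < n ∧ ℓ ≡ (i : ℤ) * s1 [ZMOD (dplus : ℤ)]

/-- `ℓ ∈ Q_i(A)` for `A = T_n⟨S;T⟩`. -/
def Qset (n : ℕ) (S T : Finset ℕ) (i : ℕ) (ℓ : ℤ) : Prop :=
  -(n : ℤ) < ℓ ∧ ℓ < n ∧ ∃ a b : ℕ → ℕ,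
    ((∑ s ∈ S, (a s : ℤ) * s) - ∑ t ∈ T, (b t : ℤ) * t) = ℓ ∧
    ((∑ s ∈ S, a s) + ∑ t ∈ T, b t) = i

/-- `ℓ ∈ R_i(A)` for `A = T_n⟨S;T⟩`. -/
def Rset (n : ℕ) (S T : Finset ℕ) (i : ℕ) (ℓ : ℤ) : Prop :=
  -(n : ℤ) < ℓ ∧ ℓ < n ∧ ∀ u ∈ Finset.Icc 1 n, ∀ v ∈ Finset.Icc 1 n,
    (v : ℤ) - u = ℓ → hasWalk n S T u v i

/-- `T_n⟨S;T⟩` is walk-ensured (with `s1 = min S`). -/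
def walkEnsured (n : ℕ) (S T : Finset ℕ) (s1 : ℕ) : Prop :=
  ∃ M : ℕ, 0 < M ∧ ∀ u ∈ Finset.Icc 1 n, ∀ v ∈ Finset.Icc 1 n, ∀ ℓ : ℕ, M ≤ ℓ →
    ((v : ℤ) - u ≡ (ℓ : ℤ) * s1 [ZMOD ((sumGcd S T : ℕ) : ℤ)]) → hasWalk n S T u v ℓ


/-!
Every arc of `D(T_n⟨S;T⟩)` moves by some `s ∈ S` or some `-t` with `t ∈ T`, and all of these are
congruent to `s₁ = min S` modulo `d⁺`, so a walk of length `m` from `u` to `v` forces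
`v - u ≡ m s₁ (mod d⁺)`. Walk-ensuredness is the converse for large `m`, so eventually the walks of
length `m` are determined by `m s₁ mod d⁺`, and `p` is an eventual period iff `d⁺ ∣ p s₁`.
Since `s ≡ s₁` and `t ≡ -s₁` modulo `d⁺`, this is equivalent to `d⁺ ∣ p d`, i.e. to `d⁺/d ∣ p`.
-/

open Finset

section Toeplitz

variable {n : ℕ} {S T : Finset ℕ} {s₀ : ℕ}

theorem sumGcd_dvd_add {s t : ℕ} (hs : s ∈ S) (ht : t ∈ T) : sumGcd S T ∣ s + t :=
  Finset.gcd_dvd (f := fun p : ℕ × ℕ => p.1 + p.2) (b := (s, t)) (mem_product.2 ⟨hs, ht⟩)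

theorem unionGcd_dvd_sumGcd : unionGcd S T ∣ sumGcd S T :=
  Finset.dvd_gcd fun _ hp => dvd_add (Finset.gcd_dvd (mem_union_left T (mem_product.1 hp).1))
    (Finset.gcd_dvd (mem_union_right S (mem_product.1 hp).2))

theorem neg_modEq_sumGcd {t : ℕ} (hs₀ : s₀ ∈ S) (ht : t ∈ T) :
    -(t : ℤ) ≡ s₀ [ZMOD sumGcd S T] :=
  Int.modEq_iff_dvd.2 <| by simpa using Int.natCast_dvd_natCast.2 (sumGcd_dvd_add hs₀ ht)

theorem modEq_sumGcd {s : ℕ} (hT : T.Nonempty) (hs₀ : s₀ ∈ S) (hs : s ∈ S) :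
    (s : ℤ) ≡ s₀ [ZMOD sumGcd S T] :=
  let ⟨_, ht⟩ := hT
  (neg_modEq_sumGcd hs ht).symm.trans (neg_modEq_sumGcd hs₀ ht)

theorem sumGcd_dvd_mul_iff (hT : T.Nonempty) (hs₀ : s₀ ∈ S) (p : ℕ) :
    sumGcd S T ∣ p * s₀ ↔ sumGcd S T ∣ p * unionGcd S T := by
  refine ⟨fun h => ?_, fun h => h.trans (mul_dvd_mul_left p (Finset.gcd_dvd (mem_union_left T hs₀)))⟩
  have hps₀ : (p : ℤ) * s₀ ≡ 0 [ZMOD sumGcd S T] := Int.modEq_zero_iff_dvd.2 (by exact_mod_cast h)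
  have hdvd : ∀ x ∈ S ∪ T, sumGcd S T ∣ p * id x := by
    intro x hx
    rw [id, ← Int.natCast_dvd_natCast, Nat.cast_mul]
    rcases mem_union.1 hx with hx | hx
    · exact Int.modEq_zero_iff_dvd.1 (((modEq_sumGcd hT hs₀ hx).mul_left p).trans hps₀)
    · simpa using Int.modEq_zero_iff_dvd.1 (((neg_modEq_sumGcd hs₀ hx).mul_left p).trans hps₀)
  have := Finset.dvd_gcd hdvd
  rwa [Finset.gcd_mul_left, normalize_eq] at this

theorem arc.sub_modEq {u v : ℕ} (hT : T.Nonempty) (hs₀ : s₀ ∈ S) (h : arc n S T u v) :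
    (v : ℤ) - u ≡ s₀ [ZMOD sumGcd S T] := by
  obtain ⟨-, -, ⟨s, hs, hvu⟩ | ⟨t, ht, huv⟩⟩ := h
  · rw [hvu]
    exact modEq_sumGcd hT hs₀ hs
  · rw [show (v : ℤ) - u = -t by omega]
    exact neg_modEq_sumGcd hs₀ ht

theorem hasWalk_zero {u v : ℕ} : hasWalk n S T u v 0 ↔ u = v :=
  ⟨fun ⟨_, h0, h1, _⟩ => h0.symm.trans h1, fun h => ⟨fun _ => u, rfl, h, by simp⟩⟩

theorem hasWalk_succ {u v m : ℕ} :
    hasWalk n S T u v (m + 1) ↔ ∃ w, hasWalk n S T u w m ∧ arc n S T w v := by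
  constructor
  · rintro ⟨f, h0, hm, hf⟩
    exact ⟨f m, ⟨f, h0, rfl, fun i hi => hf i (by omega)⟩, hm ▸ hf m (by omega)⟩
  · rintro ⟨w, ⟨f, h0, hm, hf⟩, hwv⟩
    refine ⟨fun i => if i ≤ m then f i else v, by simp [h0], by simp, fun i hi => ?_⟩
    rcases Nat.lt_or_ge i m with hi' | hi'
    · simpa [hi'.le, Nat.succ_le_of_lt hi'] using hf i hi'
    · obtain rfl : i = m := by omega
      simpa [hm] using hwv

theorem hasWalk.sub_modEq {u v m : ℕ} (hT : T.Nonempty) (hs₀ : s₀ ∈ S)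
    (h : hasWalk n S T u v m) : (v : ℤ) - u ≡ m * s₀ [ZMOD sumGcd S T] := by
  induction m generalizing v with
  | zero => simp [hasWalk_zero.1 h]
  | succ m ih =>
    obtain ⟨w, huw, hwv⟩ := hasWalk_succ.1 h
    have := (ih huw).add (hwv.sub_modEq hT hs₀)
    rwa [sub_add_sub_cancel', ← add_one_mul, ← Nat.cast_add_one] at this

theorem hasWalk.mem_Icc {u v m : ℕ} (h : hasWalk n S T u v m) (hm : 0 < m) :
    u ∈ Icc 1 n ∧ v ∈ Icc 1 n := by
  obtain ⟨f, rfl, rfl, hf⟩ := h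
  exact ⟨(hf 0 hm).1, by simpa [Nat.sub_add_cancel hm] using (hf (m - 1) (by omega)).2.1⟩

theorem walkEnsured.hasWalk_iff (hT : T.Nonempty) (hs₀ : s₀ ∈ S)
    (hwe : walkEnsured n S T s₀) : ∃ M, ∀ m, M ≤ m → ∀ u v, hasWalk n S T u v m ↔
      u ∈ Icc 1 n ∧ v ∈ Icc 1 n ∧ (v : ℤ) - u ≡ m * s₀ [ZMOD sumGcd S T] := by
  obtain ⟨M, hM, hwalk⟩ := hwe
  exact ⟨M, fun m hm u v => ⟨fun h => ⟨(h.mem_Icc (by omega)).1, (h.mem_Icc (by omega)).2,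
    h.sub_modEq hT hs₀⟩, fun ⟨hu, hv, h⟩ => hwalk u hu v hv m hm h⟩⟩

theorem walkEnsured.eventually_periodic_iff (hn : 1 ≤ n) (hT : T.Nonempty) (hs₀ : s₀ ∈ S)
    (hd : 0 < sumGcd S T) (hwe : walkEnsured n S T s₀) (p : ℕ) :
    (∃ M : ℕ, ∀ m : ℕ, M ≤ m → ∀ u v : ℕ,
      (hasWalk n S T u v m ↔ hasWalk n S T u v (m + p))) ↔ sumGcd S T ∣ p * s₀ := by
  obtain ⟨M, hM⟩ := hwe.hasWalk_iff hT hs₀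
  constructor
  · rintro ⟨M', hM'⟩
    have h1 : 1 ∈ Icc 1 n := mem_Icc.2 ⟨le_rfl, hn⟩
    -- a length divisible by `d⁺` admits a closed walk at vertex `1`
    set m := sumGcd S T * (M + M')
    have hm : M + M' ≤ m := Nat.le_mul_of_pos_left _ hd
    have hwalk := (hM' m (by omega) 1 1).1 ((hM m (by omega) 1 1).2
      ⟨h1, h1, by simpa [m] using (Int.modEq_zero_iff_dvd.2
        ((Int.dvd_mul_right (sumGcd S T : ℤ) (M + M')).mul_right (s₀ : ℤ))).symm⟩)
    have := Int.ModEq.dvd (((hM (m + p) (by omega) 1 1).1 hwalk).2.2)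
    rw [← Int.natCast_dvd_natCast]
    simpa [m, add_mul, mul_assoc, dvd_add_right (Int.dvd_mul_right _ _)] using this
  · intro h
    refine ⟨M, fun m hm u v => ?_⟩
    have hp : ((m + p : ℕ) : ℤ) * s₀ ≡ m * s₀ [ZMOD sumGcd S T] := by
      simpa [add_mul] using (Int.modEq_zero_iff_dvd.2 (by exact_mod_cast h)).add_left
        ((m : ℤ) * s₀)
    rw [hM m hm, hM (m + p) (by omega)]
    exact and_congr_right' (and_congr_right' ⟨fun h => h.trans hp.symm, fun h => h.trans hp⟩)

end Toeplitz

theorem stmt14_general (n : ℕ) (S T : Finset ℕ) (hS : S.Nonempty) (hT : T.Nonempty)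
    (hSsub : S ⊆ Finset.Icc 1 (n - 1))
    (hwe : walkEnsured n S T (S.min' hS)) :
    IsLeast {p : ℕ | 0 < p ∧ ∃ M : ℕ, ∀ m : ℕ, M ≤ m → ∀ u v : ℕ,
        (hasWalk n S T u v m ↔ hasWalk n S T u v (m + p))}
      (sumGcd S T / unionGcd S T) := by
  have hs₁ := S.min'_mem hS
  have hs₁_mem := mem_Icc.1 (hSsub hs₁)
  have ⟨t, ht⟩ := hT
  have hdplus : 0 < sumGcd S T := Nat.pos_of_dvd_of_pos (sumGcd_dvd_add hs₁ ht) (by omega)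
  have hd : 0 < unionGcd S T := Nat.pos_of_dvd_of_pos unionGcd_dvd_sumGcd hdplus
  have hperiod : ∀ p, (∃ M : ℕ, ∀ m : ℕ, M ≤ m → ∀ u v : ℕ,
      (hasWalk n S T u v m ↔ hasWalk n S T u v (m + p))) ↔ sumGcd S T / unionGcd S T ∣ p :=
    fun p => by
      rw [hwe.eventually_periodic_iff (by omega) hT hs₁ hdplus, sumGcd_dvd_mul_iff hT hs₁,
        Nat.div_dvd_iff_dvd_mul unionGcd_dvd_sumGcd hd, mul_comm]
  exact ⟨⟨Nat.div_pos (Nat.le_of_dvd hdplus unionGcd_dvd_sumGcd) hd, (hperiod _).2 dvd_rfl⟩,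
    fun p ⟨hp, hper⟩ => Nat.le_of_dvd hp ((hperiod p).1 hper)⟩

theorem stmt14 (n : ℕ) (S T : Finset ℕ) (hS : S.Nonempty) (hT : T.Nonempty)
    (hSsub : S ⊆ Finset.Icc 1 (n - 1)) (hTsub : T ⊆ Finset.Icc 1 (n - 1))
    (hwe : walkEnsured n S T (S.min' hS)) :
    IsLeast {p : ℕ | 0 < p ∧ ∃ M : ℕ, ∀ m : ℕ, M ≤ m → ∀ u v : ℕ,
        (hasWalk n S T u v m ↔ hasWalk n S T u v (m + p))}
      (sumGcd S T / unionGcd S T) :=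
  stmt14_general n S T hS hT hSsub hwe
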